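/- arXiv:2403.17026 — 2 statements merged into one kernel-verified Lean document; each statement's English description precedes it below -/
import Mathlib

section
/- If δ is a Woodin cardinal, then the collection F = {X ⊆ δ : κ \ X is not Woodin in κ}, more precisely F = {X ⊆ δ : no α ∈ δ \ X is (<δ−A)-strong for the relevant witnessing sets}, is closed under intersection: if A, B ∈ F then A ∩ B ∈ F. -/
open FirstOrder

/-- Relation symbols for the language of set theory: a single binary membership relation. -/
inductive memRel : ℕ → Type
  | mem : memRel 2

/-- The first-order language of set theory. -/
def memLang : FirstOrder.Language := ⟨fun _ => Empty, memRel⟩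

/-- `ZFSet` (the universe `V`) as a structure in the language of set theory. -/
instance : memLang.Structure ZFSet where
  funMap := fun f _ => f.elim
  RelMap := fun r v => match r with | .mem => v 0 ∈ v 1

/-- Any class (i.e. `Set ZFSet`) as a structure in the language of set theory. -/
instance (C : Set ZFSet) : memLang.Structure C where
  funMap := fun f _ => f.elim
  RelMap := fun r v => match r with | .mem => (v 0 : ZFSet) ∈ (v 1 : ZFSet)

/-- A class is transitive if every element is a subset of it. -/
def IsTransClass (M : Set ZFSet) : Prop := ∀ x ∈ M, ∀ y ∈ x, y ∈ M

/-- A ZF-set is transitive. -/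
def IsTransSet (t : ZFSet) : Prop := ∀ y ∈ t, y ⊆ t

/-- A ZF-set is an ordinal: transitive and all its members are transitive. -/
def IsOrd (x : ZFSet) : Prop := IsTransSet x ∧ ∀ y ∈ x, IsTransSet y

/-- The class `H_κ` of sets hereditarily of cardinality less than `κ`. -/
def HClass (κ : ZFSet) : Set ZFSet :=
  {x | ∃ t : ZFSet, IsTransSet t ∧ x ∈ t ∧ Cardinal.mk t.toSet < Cardinal.mk κ.toSet}

/-- The value in `V` of an elementary embedding `j : V → M` (`M` a class). -/
def jv {M : Set ZFSet} (j : ZFSet ↪ₑ[memLang] M) (x : ZFSet) : ZFSet := (j x : ZFSet)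

/-- `κ` is the critical point of `j : V → M` : it is an ordinal moved by `j`
all of whose members are fixed by `j`. -/
def IsCritPt {M : Set ZFSet} (j : ZFSet ↪ₑ[memLang] M) (κ : ZFSet) : Prop :=
  IsOrd κ ∧ jv j κ ≠ κ ∧ ∀ α ∈ κ, jv j α = α

/-- `κ` is `(λ-X)`-strong: there are a transitive class `M` and an elementary
embedding `j : V → M` with critical point `κ`, `j(κ) ≥ λ` and `j(X) ∩ H_λ = X ∩ H_λ`. -/
def IsStrong (κ lam X : ZFSet) : Prop :=
  ∃ (M : Set ZFSet) (_ : IsTransClass M) (j : ZFSet ↪ₑ[memLang] M),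
    IsCritPt j κ ∧ lam ⊆ jv j κ ∧
    (jv j X).toSet ∩ HClass lam = X.toSet ∩ HClass lam

/-- `δ` is strongly inaccessible: a regular ordinal with `2^λ < δ` for all `λ < δ`. -/
def Inacc (δ : ZFSet) : Prop :=
  IsOrd δ ∧ (Cardinal.mk δ.toSet).IsRegular ∧
    ∀ lam ∈ δ, (2 : Cardinal) ^ Cardinal.mk lam.toSet < Cardinal.mk δ.toSet

/-- `δ` is a Woodin cardinal. -/
def IsWoodin (δ : ZFSet) : Prop :=
  Inacc δ ∧ ∀ X : ZFSet, X.toSet ⊆ HClass δ →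
    ∃ κ ∈ δ, ∀ lam ∈ δ, IsStrong κ lam X

/-- The Woodin filter on `δ`: `X ∈ F` iff `X ⊆ δ` and for some `A ⊆ H_δ` no
`α ∈ δ \ X` is `(<δ-A)`-strong, i.e. all `(<δ-A)`-strong `α < δ` lie in `X`. -/
def WoodinFilter (δ : ZFSet) : Set ZFSet :=
  {X | X ⊆ δ ∧ ∃ A : ZFSet, A.toSet ⊆ HClass δ ∧
    ∀ α ∈ δ, (∀ lam ∈ δ, IsStrong α lam A) → α ∈ X}

/-! ### Auxiliary machinery -/

open FirstOrder.Language

section snocEval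
variable {S : Type*}
@[simp] lemma snoc1_0 (xs : Fin 0 → S) (a : S) : (Fin.snoc xs a : Fin 1 → S) 0 = a := rfl
@[simp] lemma snoc2_0 (xs : Fin 1 → S) (a : S) : (Fin.snoc xs a : Fin 2 → S) 0 = xs 0 := rfl
@[simp] lemma snoc2_1 (xs : Fin 1 → S) (a : S) : (Fin.snoc xs a : Fin 2 → S) 1 = a := rfl
@[simp] lemma snoc3_0 (xs : Fin 2 → S) (a : S) : (Fin.snoc xs a : Fin 3 → S) 0 = xs 0 := rfl
@[simp] lemma snoc3_1 (xs : Fin 2 → S) (a : S) : (Fin.snoc xs a : Fin 3 → S) 1 = xs 1 := rfl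
@[simp] lemma snoc3_2 (xs : Fin 2 → S) (a : S) : (Fin.snoc xs a : Fin 3 → S) 2 = a := rfl
@[simp] lemma snoc4_0 (xs : Fin 3 → S) (a : S) : (Fin.snoc xs a : Fin 4 → S) 0 = xs 0 := rfl
@[simp] lemma snoc4_1 (xs : Fin 3 → S) (a : S) : (Fin.snoc xs a : Fin 4 → S) 1 = xs 1 := rfl
@[simp] lemma snoc4_2 (xs : Fin 3 → S) (a : S) : (Fin.snoc xs a : Fin 4 → S) 2 = xs 2 := rfl
@[simp] lemma snoc4_3 (xs : Fin 3 → S) (a : S) : (Fin.snoc xs a : Fin 4 → S) 3 = a := rfl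
end snocEval

/-- membership atomic bounded formula -/
abbrev memBF {α : Type} {n : ℕ} (t₁ t₂ : memLang.Term (α ⊕ Fin n)) : memLang.BoundedFormula α n :=
  Relations.boundedFormula₂ memRel.mem t₁ t₂

/-- the atomic membership formula in two free variables -/
def memF : memLang.Formula (Fin 2) :=
  Relations.formula₂ memRel.mem (Term.var 0) (Term.var 1)

/-- `∀ z, ¬ z ∈ v₀` : v₀ is empty -/
def emptyF : memLang.Formula (Fin 1) :=
  BoundedFormula.all (∼(memBF (Term.var (Sum.inr 0)) (Term.var (Sum.inl 0))))

/-- `∀ z, z ∈ v₀ ↔ (z = v₁ ∨ z ∈ v₂)` : v₀ = insert v₁ v₂ -/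
def insertF : memLang.Formula (Fin 3) :=
  BoundedFormula.all ((memBF (Term.var (Sum.inr 0)) (Term.var (Sum.inl 0))).iff
    (((Term.var (Sum.inr 0) : memLang.Term (Fin 3 ⊕ Fin 1)) =' Term.var (Sum.inl 1)) ⊔
      memBF (Term.var (Sum.inr 0)) (Term.var (Sum.inl 2))))

/-- `∀ w, w ∈ z ↔ w = t` where `z = &2`, `t` is free var 2 -/
def singF : memLang.BoundedFormula (Fin 3) 3 :=
  BoundedFormula.all ((memBF (Term.var (Sum.inr 3)) (Term.var (Sum.inr 2))).iff
    ((Term.var (Sum.inr 3) : memLang.Term (Fin 3 ⊕ Fin 4)) =' Term.var (Sum.inl 2)))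

/-- `∀ w, w ∈ z ↔ (w = t ∨ w = x)` where `z = &2`, `x = &0`, `t` is free var 2 -/
def upairF : memLang.BoundedFormula (Fin 3) 3 :=
  BoundedFormula.all ((memBF (Term.var (Sum.inr 3)) (Term.var (Sum.inr 2))).iff
    ((((Term.var (Sum.inr 3) : memLang.Term (Fin 3 ⊕ Fin 4)) =' Term.var (Sum.inl 2))) ⊔
      ((Term.var (Sum.inr 3) : memLang.Term (Fin 3 ⊕ Fin 4)) =' Term.var (Sum.inr 0))))

/-- `p = ⟨t, x⟩` (Kuratowski), at level 2, where `x = &0`, `p = &1`, `t` is free var 2 -/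
def pairF : memLang.BoundedFormula (Fin 3) 2 :=
  (BoundedFormula.ex (memBF (Term.var (Sum.inr 2)) (Term.var (Sum.inr 1)) ⊓ singF)) ⊓
  (BoundedFormula.ex (memBF (Term.var (Sum.inr 2)) (Term.var (Sum.inr 1)) ⊓ upairF)) ⊓
  (BoundedFormula.all ((memBF (Term.var (Sum.inr 2)) (Term.var (Sum.inr 1))).imp (singF ⊔ upairF)))

/-- `χ : ∀ x, x ∈ v₀ ↔ ∃ p, p ∈ v₁ ∧ p = ⟨v₂, x⟩` -/
def chiF : memLang.Formula (Fin 3) :=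
  BoundedFormula.all ((memBF (Term.var (Sum.inr 0)) (Term.var (Sum.inl 0))).iff
    (BoundedFormula.ex (memBF (Term.var (Sum.inr 1)) (Term.var (Sum.inl 1)) ⊓ pairF)))

@[simp] lemma realize_memBF {S : Type*} [memLang.Structure S] {α : Type} {n : ℕ}
    (t₁ t₂ : memLang.Term (α ⊕ Fin n)) (v : α → S) (xs : Fin n → S) :
    (memBF t₁ t₂).Realize v xs ↔ Structure.RelMap (L := memLang) memRel.mem
      ![t₁.realize (Sum.elim v xs), t₂.realize (Sum.elim v xs)] :=
  BoundedFormula.realize_rel₂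

lemma ZFSet.mem_toSet (a u : ZFSet) : a ∈ u.toSet ↔ a ∈ u := Iff.rfl

lemma ZFSet.toSet_empty : (∅ : ZFSet).toSet = ∅ := ZFSet.coe_empty

lemma ZFSet.toSet_singleton (x : ZFSet) : ({x} : ZFSet).toSet = {x} := ZFSet.coe_singleton x

lemma ZFSet.toSet_union (x y : ZFSet) : (x ∪ y).toSet = x.toSet ∪ y.toSet := ZFSet.coe_union x y

theorem realize_memF {S : Type*} [memLang.Structure S] (E : S → S → Prop)
    (hE : ∀ a b : S, Structure.RelMap (L := memLang) memRel.mem ![a,b] ↔ E a b)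
    (v : Fin 2 → S) :
    memF.Realize v ↔ E (v 0) (v 1) := by
  simp only [memF]; exact Formula.realize_rel₂.trans (hE _ _)

theorem realize_emptyF {S : Type*} [memLang.Structure S] (E : S → S → Prop)
    (hE : ∀ a b : S, Structure.RelMap (L := memLang) memRel.mem ![a,b] ↔ E a b)
    (v : Fin 1 → S) :
    emptyF.Realize v ↔ ∀ z : S, ¬ E z (v 0) := by
  simp [emptyF, Formula.Realize, BoundedFormula.realize_all, BoundedFormula.realize_not,
    BoundedFormula.realize_rel₂, hE, Fin.snoc]

theorem realize_insertF {S : Type*} [memLang.Structure S] (E : S → S → Prop)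
    (hE : ∀ a b : S, Structure.RelMap (L := memLang) memRel.mem ![a,b] ↔ E a b)
    (v : Fin 3 → S) :
    insertF.Realize v ↔ ∀ z : S, E z (v 0) ↔ (z = v 1 ∨ E z (v 2)) := by
  simp [insertF, Formula.Realize, BoundedFormula.realize_all, BoundedFormula.realize_iff,
    BoundedFormula.realize_sup, BoundedFormula.realize_bdEqual,
    BoundedFormula.realize_rel₂, hE, Fin.snoc]

theorem realize_chiF {S : Type*} [memLang.Structure S] (E : S → S → Prop)
    (hE : ∀ a b : S, Structure.RelMap (L := memLang) memRel.mem ![a,b] ↔ E a b)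
    (v : Fin 3 → S) :
    chiF.Realize v ↔ ∀ x : S, E x (v 0) ↔ ∃ p : S, E p (v 1) ∧
      ((∃ z, E z p ∧ ∀ w, E w z ↔ w = v 2) ∧
       (∃ z, E z p ∧ ∀ w, E w z ↔ (w = v 2 ∨ w = x)) ∧
       (∀ z, E z p → ((∀ w, E w z ↔ w = v 2) ∨ (∀ w, E w z ↔ (w = v 2 ∨ w = x))))) := by
  simp [chiF, pairF, singF, upairF, Formula.Realize, BoundedFormula.realize_all,
    BoundedFormula.realize_iff, BoundedFormula.realize_ex, BoundedFormula.realize_inf,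
    BoundedFormula.realize_sup, BoundedFormula.realize_imp, BoundedFormula.realize_bdEqual,
    BoundedFormula.realize_rel₂, hE, and_assoc]

lemma relMap_V' (a b : ZFSet) :
    Structure.RelMap (L := memLang) memRel.mem ![a,b] ↔ a ∈ b := Iff.rfl

lemma relMap_M' {M : Set ZFSet} (a b : M) :
    Structure.RelMap (L := memLang) (M := M) memRel.mem ![a,b] ↔ (a:ZFSet) ∈ (b:ZFSet) :=
  Iff.rfl

theorem realize_memF_V (v : Fin 2 → ZFSet) : memF.Realize v ↔ v 0 ∈ v 1 :=
  realize_memF (fun a b => a ∈ b) relMap_V' v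

theorem realize_memF_M {M : Set ZFSet} (v : Fin 2 → M) :
    memF.Realize v ↔ (v 0 : ZFSet) ∈ (v 1 : ZFSet) :=
  realize_memF (fun a b : M => (a : ZFSet) ∈ (b : ZFSet)) relMap_M' v

theorem realize_emptyF_V (v : Fin 1 → ZFSet) :
    emptyF.Realize v ↔ ∀ z : ZFSet, z ∉ v 0 :=
  realize_emptyF (fun a b => a ∈ b) relMap_V' v

theorem realize_emptyF_M {M : Set ZFSet} (v : Fin 1 → M) :
    emptyF.Realize v ↔ ∀ z : M, ¬ (z : ZFSet) ∈ (v 0 : ZFSet) :=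
  realize_emptyF (fun a b : M => (a : ZFSet) ∈ (b : ZFSet)) relMap_M' v

theorem realize_insertF_V (v : Fin 3 → ZFSet) :
    insertF.Realize v ↔ ∀ z : ZFSet, z ∈ v 0 ↔ (z = v 1 ∨ z ∈ v 2) :=
  realize_insertF (fun a b => a ∈ b) relMap_V' v

theorem realize_insertF_M {M : Set ZFSet} (v : Fin 3 → M) :
    insertF.Realize v ↔ ∀ z : M, (z : ZFSet) ∈ (v 0 : ZFSet) ↔
      (z = v 1 ∨ (z : ZFSet) ∈ (v 2 : ZFSet)) :=
  realize_insertF (fun a b : M => (a : ZFSet) ∈ (b : ZFSet)) relMap_M' v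

theorem realize_chiF_V (v : Fin 3 → ZFSet) :
    chiF.Realize v ↔ ∀ x : ZFSet, x ∈ v 0 ↔ ∃ p : ZFSet, p ∈ v 1 ∧
      ((∃ z, z ∈ p ∧ ∀ w, w ∈ z ↔ w = v 2) ∧
       (∃ z, z ∈ p ∧ ∀ w, w ∈ z ↔ (w = v 2 ∨ w = x)) ∧
       (∀ z, z ∈ p → ((∀ w, w ∈ z ↔ w = v 2) ∨ (∀ w, w ∈ z ↔ (w = v 2 ∨ w = x))))) :=
  realize_chiF (fun a b => a ∈ b) relMap_V' v

theorem realize_chiF_M {M : Set ZFSet} (v : Fin 3 → M) :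
    chiF.Realize v ↔ ∀ x : M, (x : ZFSet) ∈ (v 0 : ZFSet) ↔ ∃ p : M,
      (p : ZFSet) ∈ (v 1 : ZFSet) ∧
      ((∃ z : M, (z : ZFSet) ∈ (p : ZFSet) ∧ ∀ w : M, (w : ZFSet) ∈ (z : ZFSet) ↔ w = v 2) ∧
       (∃ z : M, (z : ZFSet) ∈ (p : ZFSet) ∧
          ∀ w : M, (w : ZFSet) ∈ (z : ZFSet) ↔ (w = v 2 ∨ w = x)) ∧
       (∀ z : M, (z : ZFSet) ∈ (p : ZFSet) →
          ((∀ w : M, (w : ZFSet) ∈ (z : ZFSet) ↔ w = v 2) ∨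
           (∀ w : M, (w : ZFSet) ∈ (z : ZFSet) ↔ (w = v 2 ∨ w = x))))) :=
  realize_chiF (fun a b : M => (a : ZFSet) ∈ (b : ZFSet)) relMap_M' v

/-! ### Basic consequences of elementarity -/

section Elementarity

variable {M : Set ZFSet}

/-- membership is preserved and reflected by `j` -/
theorem jv_mem_iff (j : ZFSet ↪ₑ[memLang] M) (a b : ZFSet) : a ∈ b ↔ jv j a ∈ jv j b := by
  have h := j.map_formula memF ![a, b]
  rw [realize_memF_V, realize_memF_M] at h
  exact h.symm

/-- `j ∅ = ∅` -/
theorem jv_empty (hM : IsTransClass M) (j : ZFSet ↪ₑ[memLang] M) : jv j (∅ : ZFSet) = ∅ := by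
  have h := (j.map_formula emptyF ![∅]).mpr ?_
  · rw [realize_emptyF_M] at h
    rw [ZFSet.eq_empty]
    intro y hy
    have hyM : y ∈ M := hM _ (j ∅).2 y hy
    exact h ⟨y, hyM⟩ hy
  · rw [realize_emptyF_V]
    exact fun z => ZFSet.notMem_empty z

/-- `j (insert a s) = insert (j a) (j s)` -/
theorem jv_insert (hM : IsTransClass M) (j : ZFSet ↪ₑ[memLang] M) (a s : ZFSet) : jv j (insert a s) = insert (jv j a) (jv j s) := by
  have h := (j.map_formula insertF ![insert a s, a, s]).mpr ?_
  · rw [realize_insertF_M] at h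
    apply ZFSet.ext
    intro y
    rw [ZFSet.mem_insert_iff]
    constructor
    · intro hy
      have hyM : y ∈ M := hM _ (j (insert a s)).2 y hy
      have := (h ⟨y, hyM⟩).mp hy
      rcases this with h1 | h2
      · exact Or.inl (congrArg Subtype.val h1)
      · exact Or.inr h2
    · rintro (rfl | hy)
      · exact (h (j a)).mpr (Or.inl rfl)
      · have hyM : y ∈ M := hM _ (j s).2 y hy
        exact (h ⟨y, hyM⟩).mpr (Or.inr hy)
  · rw [realize_insertF_V]
    exact fun z => ZFSet.mem_insert_iff

/-! ### Hereditarily finite sets are fixed by `j` -/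

end Elementarity

/-- Hereditarily finite ZF-sets. -/
inductive HFin : ZFSet → Prop
  | intro (x : ZFSet) : x.toSet.Finite → (∀ y ∈ x, HFin y) → HFin x

section HFinFix

variable {M : Set ZFSet}

lemma jv_fix_of_card (hM : IsTransClass M) (j : ZFSet ↪ₑ[memLang] M) : ∀ (n : ℕ) (y : ZFSet), y.toSet.Finite → y.toSet.ncard = n →
    (∀ a ∈ y, jv j a = a) → jv j y = y := by
  intro n
  induction n with
  | zero =>
    intro y hfin hcard _
    have hset : y.toSet = ∅ := (Set.ncard_eq_zero hfin).mp hcard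
    have hy : y = ∅ := by
      rw [ZFSet.eq_empty]
      intro z hz
      have hz' : z ∈ y.toSet := (ZFSet.mem_toSet _ _).mpr hz
      rw [hset] at hz'
      exact hz'
    rw [hy]; exact jv_empty hM j
  | succ n IH =>
    intro y hfin hcard hfix
    have hne : y.toSet.Nonempty := by
      apply Set.nonempty_of_ncard_ne_zero; omega
    obtain ⟨a, ha⟩ := hne
    have haY : a ∈ y := (ZFSet.mem_toSet _ _).mp ha
    set y' := ZFSet.sep (fun z => z ≠ a) y with hy'def
    have hy'mem : ∀ z, z ∈ y' ↔ z ∈ y ∧ z ≠ a := fun z => ZFSet.mem_sep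
    have hyins : y = insert a y' := by
      apply ZFSet.ext; intro z
      rw [ZFSet.mem_insert_iff, hy'mem]
      by_cases hz : z = a
      · subst hz; simp [haY]
      · simp [hz]
    have hy'set : y'.toSet = y.toSet \ {a} := by
      ext z
      simp only [Set.mem_diff, Set.mem_singleton_iff, ZFSet.mem_toSet, hy'mem]
    have hy'fin : y'.toSet.Finite := by rw [hy'set]; exact hfin.diff
    have hy'card : y'.toSet.ncard = n := by
      rw [hy'set, Set.ncard_diff_singleton_of_mem ha, hcard]
      omega
    have hfix' : ∀ b ∈ y', jv j b = b := fun b hb => hfix b ((hy'mem b).mp hb).1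
    have hstep := jv_insert hM j a y'
    rw [hyins]
    rw [hstep, hfix a haY, IH y' hy'fin hy'card hfix']

theorem jv_fix_of_hfin (hM : IsTransClass M) (j : ZFSet ↪ₑ[memLang] M) {x : ZFSet} (h : HFin x) : jv j x = x := by
  induction h with
  | intro x hfin hmem IH =>
    exact jv_fix_of_card hM j x.toSet.ncard x hfin rfl IH

end HFinFix

/-! ### `HClass` lemmas -/

lemma hfin_of_mem_trans_fin {t : ZFSet} (htr : IsTransSet t) (hfin : t.toSet.Finite) :
    ∀ x ∈ t, HFin x := by
  intro x
  induction x using ZFSet.inductionOn with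
  | _ x IH =>
    intro hxt
    refine HFin.intro x ?_ ?_
    · apply hfin.subset
      intro z hz
      exact (ZFSet.mem_toSet _ _).mpr (htr x hxt ((ZFSet.mem_toSet _ _).mp hz))
    · intro y hy
      exact IH y hy (htr x hxt hy)

lemma hfin_of_HClass {lam x : ZFSet} (hlam : ¬ (Cardinal.aleph0 ≤ Cardinal.mk lam.toSet))
    (hx : x ∈ HClass lam) : HFin x := by
  obtain ⟨t, htr, hxt, hcard⟩ := hx
  have : Cardinal.mk t.toSet < Cardinal.aleph0 := hcard.trans (lt_of_not_ge hlam)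
  exact hfin_of_mem_trans_fin htr (Cardinal.lt_aleph0_iff_set_finite.mp this) x hxt

lemma mem_HClass_of_mem {κ x y : ZFSet} (hx : x ∈ HClass κ) (hyx : y ∈ x) : y ∈ HClass κ := by
  obtain ⟨t, htr, hxt, hcard⟩ := hx
  exact ⟨t, htr, htr x hxt hyx, hcard⟩

lemma empty_mem_HClass {κ : ZFSet} (h : Cardinal.aleph0 ≤ Cardinal.mk κ.toSet) :
    (∅ : ZFSet) ∈ HClass κ := by
  refine ⟨{∅}, ?_, ?_, ?_⟩
  · intro y hy
    rw [ZFSet.mem_singleton] at hy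
    subst hy; exact ZFSet.empty_subset _
  · exact ZFSet.mem_singleton.mpr rfl
  · rw [ZFSet.toSet_singleton, Cardinal.mk_singleton]
    exact lt_of_lt_of_le Cardinal.one_lt_aleph0 h

lemma upair_mem_HClass {κ x y : ZFSet} (h : Cardinal.aleph0 ≤ Cardinal.mk κ.toSet)
    (hx : x ∈ HClass κ) (hy : y ∈ HClass κ) : ({x, y} : ZFSet) ∈ HClass κ := by
  obtain ⟨tx, htx, hxtx, hcx⟩ := hx
  obtain ⟨ty, hty, hyty, hcy⟩ := hy
  refine ⟨tx ∪ ty ∪ {({x, y} : ZFSet)}, ?_, ?_, ?_⟩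
  · intro z hz w hw
    rw [ZFSet.mem_union] at hz
    rw [ZFSet.mem_union]
    rcases hz with hz | hz
    · rw [ZFSet.mem_union] at hz
      left; rw [ZFSet.mem_union]
      rcases hz with hz | hz
      · exact Or.inl (htx z hz hw)
      · exact Or.inr (hty z hz hw)
    · rw [ZFSet.mem_singleton] at hz
      subst hz
      rw [ZFSet.mem_pair] at hw
      left; rw [ZFSet.mem_union]
      rcases hw with rfl | rfl
      · exact Or.inl hxtx
      · exact Or.inr hyty
  · rw [ZFSet.mem_union]; right; exact ZFSet.mem_singleton.mpr rfl
  · calc Cardinal.mk (tx ∪ ty ∪ {({x, y} : ZFSet)} : ZFSet).toSet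
        ≤ Cardinal.mk (tx ∪ ty : ZFSet).toSet + Cardinal.mk ({({x, y} : ZFSet)} : ZFSet).toSet := by
          rw [ZFSet.toSet_union]; exact Cardinal.mk_union_le _ _
      _ ≤ (Cardinal.mk tx.toSet + Cardinal.mk ty.toSet) + 1 := by
          apply add_le_add
          · rw [ZFSet.toSet_union]; exact Cardinal.mk_union_le _ _
          · rw [ZFSet.toSet_singleton, Cardinal.mk_singleton]
      _ < Cardinal.mk κ.toSet := by
          apply Cardinal.add_lt_of_lt h
          · exact Cardinal.add_lt_of_lt h hcx hcy
          · exact lt_of_lt_of_le Cardinal.one_lt_aleph0 h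

lemma singleton_mem_HClass {κ x : ZFSet} (h : Cardinal.aleph0 ≤ Cardinal.mk κ.toSet)
    (hx : x ∈ HClass κ) : ({x} : ZFSet) ∈ HClass κ := by
  have : ({x, x} : ZFSet) = ({x} : ZFSet) := by
    apply ZFSet.ext; intro z
    rw [ZFSet.mem_pair, ZFSet.mem_singleton, or_self]
  rw [← this]
  exact upair_mem_HClass h hx hx

lemma pair_mem_HClass {κ x y : ZFSet} (h : Cardinal.aleph0 ≤ Cardinal.mk κ.toSet)
    (hx : x ∈ HClass κ) (hy : y ∈ HClass κ) : ZFSet.pair x y ∈ HClass κ := by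
  show ({{x}, {x, y}} : ZFSet) ∈ HClass κ
  exact upair_mem_HClass h (singleton_mem_HClass h hx) (upair_mem_HClass h hx hy)

/-! ### Semantic characterizations of the pair condition -/

lemma sing_iff_V (z t : ZFSet) : (∀ w, w ∈ z ↔ w = t) ↔ z = ({t} : ZFSet) := by
  constructor
  · intro h; apply ZFSet.ext; intro w; rw [h w, ZFSet.mem_singleton]
  · rintro rfl w; exact ZFSet.mem_singleton

lemma upair_iff_V (z t x : ZFSet) : (∀ w, w ∈ z ↔ (w = t ∨ w = x)) ↔ z = ({t, x} : ZFSet) := by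
  constructor
  · intro h; apply ZFSet.ext; intro w; rw [h w, ZFSet.mem_pair]
  · rintro rfl w; exact ZFSet.mem_pair

lemma mem_pair_set (w t x : ZFSet) : w ∈ ZFSet.pair t x ↔ w = ({t} : ZFSet) ∨ w = ({t, x} : ZFSet) :=
  ZFSet.mem_pair

lemma pairCond_iff_V (p t x : ZFSet) :
    ((∃ z, z ∈ p ∧ ∀ w, w ∈ z ↔ w = t) ∧
     (∃ z, z ∈ p ∧ ∀ w, w ∈ z ↔ (w = t ∨ w = x)) ∧
     (∀ z, z ∈ p → ((∀ w, w ∈ z ↔ w = t) ∨ (∀ w, w ∈ z ↔ (w = t ∨ w = x)))))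
    ↔ p = ZFSet.pair t x := by
  constructor
  · rintro ⟨⟨z1, hz1, hs1⟩, ⟨z2, hz2, hs2⟩, hall⟩
    rw [sing_iff_V] at hs1
    rw [upair_iff_V] at hs2
    subst hs1; subst hs2
    apply ZFSet.ext; intro w
    rw [mem_pair_set]
    constructor
    · intro hw
      rcases hall w hw with h | h
      · exact Or.inl ((sing_iff_V _ _).mp h)
      · exact Or.inr ((upair_iff_V _ _ _).mp h)
    · rintro (rfl | rfl) <;> assumption
  · rintro rfl
    refine ⟨⟨{t}, ?_, ?_⟩, ⟨{t, x}, ?_, ?_⟩, ?_⟩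
    · exact (mem_pair_set _ _ _).mpr (Or.inl rfl)
    · exact (sing_iff_V _ _).mpr rfl
    · exact (mem_pair_set _ _ _).mpr (Or.inr rfl)
    · exact (upair_iff_V _ _ _).mpr rfl
    · intro z hz
      rcases (mem_pair_set _ _ _).mp hz with rfl | rfl
      · exact Or.inl ((sing_iff_V _ _).mpr rfl)
      · exact Or.inr ((upair_iff_V _ _ _).mpr rfl)

section Mside

variable {M : Set ZFSet}

lemma sing_iff_M (hM : IsTransClass M) {z : ZFSet} (hz : z ∈ M) (τ : M) :
    (∀ w : M, ((w : ZFSet) ∈ z ↔ w = τ)) ↔ z = ({(τ : ZFSet)} : ZFSet) := by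
  constructor
  · intro h; apply ZFSet.ext; intro w
    rw [ZFSet.mem_singleton]
    constructor
    · intro hw
      have := (h ⟨w, hM z hz w hw⟩).mp hw
      exact congrArg Subtype.val this
    · rintro rfl; exact (h τ).mpr rfl
  · rintro rfl w
    rw [ZFSet.mem_singleton]
    exact Subtype.coe_inj
 
lemma upair_iff_M (hM : IsTransClass M) {z : ZFSet} (hz : z ∈ M) (τ ξ : M) :
    (∀ w : M, ((w : ZFSet) ∈ z ↔ (w = τ ∨ w = ξ))) ↔
      z = ({(τ : ZFSet), (ξ : ZFSet)} : ZFSet) := by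
  constructor
  · intro h; apply ZFSet.ext; intro w
    rw [ZFSet.mem_pair]
    constructor
    · intro hw
      rcases (h ⟨w, hM z hz w hw⟩).mp hw with h' | h'
      · exact Or.inl (congrArg Subtype.val h')
      · exact Or.inr (congrArg Subtype.val h')
    · rintro (rfl | rfl)
      · exact (h τ).mpr (Or.inl rfl)
      · exact (h ξ).mpr (Or.inr rfl)
  · rintro rfl w
    rw [ZFSet.mem_pair]
    constructor
    · rintro (h | h)
      · exact Or.inl (Subtype.coe_inj.mp h)
      · exact Or.inr (Subtype.coe_inj.mp h)
    · rintro (rfl | rfl)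
      · exact Or.inl rfl
      · exact Or.inr rfl

lemma pairCond_iff_M (hM : IsTransClass M) {p : ZFSet} (hp : p ∈ M) (τ ξ : M) :
    ((∃ z : M, (z : ZFSet) ∈ p ∧ ∀ w : M, ((w : ZFSet) ∈ (z : ZFSet) ↔ w = τ)) ∧
     (∃ z : M, (z : ZFSet) ∈ p ∧
        ∀ w : M, ((w : ZFSet) ∈ (z : ZFSet) ↔ (w = τ ∨ w = ξ))) ∧
     (∀ z : M, (z : ZFSet) ∈ p →
        ((∀ w : M, ((w : ZFSet) ∈ (z : ZFSet) ↔ w = τ)) ∨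
         (∀ w : M, ((w : ZFSet) ∈ (z : ZFSet) ↔ (w = τ ∨ w = ξ))))))
    ↔ p = ZFSet.pair (τ : ZFSet) (ξ : ZFSet) := by
  constructor
  · rintro ⟨⟨z1, hz1, hs1⟩, ⟨z2, hz2, hs2⟩, hall⟩
    rw [sing_iff_M hM z1.2 τ] at hs1
    rw [upair_iff_M hM z2.2 τ ξ] at hs2
    apply ZFSet.ext; intro w
    rw [mem_pair_set]
    constructor
    · intro hw
      have hwM : w ∈ M := hM p hp w hw
      rcases hall ⟨w, hwM⟩ hw with h | h
      · exact Or.inl ((sing_iff_M hM hwM τ).mp h)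
      · exact Or.inr ((upair_iff_M hM hwM τ ξ).mp h)
    · rintro (rfl | rfl)
      · exact hs1 ▸ hz1
      · exact hs2 ▸ hz2
  · rintro rfl
    have hsingM : ({(τ : ZFSet)} : ZFSet) ∈ M :=
      hM _ hp _ ((mem_pair_set _ _ _).mpr (Or.inl rfl))
    have hupM : ({(τ : ZFSet), (ξ : ZFSet)} : ZFSet) ∈ M :=
      hM _ hp _ ((mem_pair_set _ _ _).mpr (Or.inr rfl))
    refine ⟨⟨⟨_, hsingM⟩, ?_, ?_⟩, ⟨⟨_, hupM⟩, ?_, ?_⟩, ?_⟩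
    · exact (mem_pair_set _ _ _).mpr (Or.inl rfl)
    · exact (sing_iff_M hM hsingM τ).mpr rfl
    · exact (mem_pair_set _ _ _).mpr (Or.inr rfl)
    · exact (upair_iff_M hM hupM τ ξ).mpr rfl
    · intro z hz
      rcases (mem_pair_set _ _ _).mp hz with h | h
      · exact Or.inl ((sing_iff_M hM z.2 τ).mpr h)
      · exact Or.inr ((upair_iff_M hM z.2 τ ξ).mpr h)

end Mside

/-! ### The coding set -/

/-- `{⟨t, x⟩ : x ∈ X}` -/
noncomputable def tagSet (t X : ZFSet) : ZFSet :=
  @ZFSet.image (fun x => ZFSet.pair t x) (Classical.allZFSetDefinable _) X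

lemma mem_tagSet {t X y : ZFSet} : y ∈ tagSet t X ↔ ∃ x ∈ X, ZFSet.pair t x = y :=
  @ZFSet.mem_image _ (Classical.allZFSetDefinable _) _ _

/-- the key decoding property of the coding set, in `V`. -/
lemma code_decode {t0 t1 XA XB : ZFSet} (hne : t0 ≠ t1) (x : ZFSet) :
    x ∈ XA ↔ ZFSet.pair t0 x ∈ tagSet t0 XA ∪ tagSet t1 XB := by
  constructor
  · intro hx
    rw [ZFSet.mem_union]
    exact Or.inl (mem_tagSet.mpr ⟨x, hx, rfl⟩)
  · intro hp
    rw [ZFSet.mem_union] at hp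
    rcases hp with hp | hp
    · obtain ⟨y, hy, hxy⟩ := mem_tagSet.mp hp
      obtain ⟨-, rfl⟩ := ZFSet.pair_injective hxy
      exact hy
    · obtain ⟨y, hy, hxy⟩ := mem_tagSet.mp hp
      exact absurd (ZFSet.pair_injective hxy).1 (fun h => hne h.symm)

/-! ### Strongness transfer -/

/-- When everything in `H_lam` is hereditarily finite, strongness for any set
transfers to strongness for every set. -/
lemma isStrong_of_hfin {α lam Y : ZFSet}
    (hlam : ¬ (Cardinal.aleph0 ≤ Cardinal.mk lam.toSet)) (h : IsStrong α lam Y)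
    (X : ZFSet) : IsStrong α lam X := by
  obtain ⟨M, hM, j, hcrit, hsub, -⟩ := h
  refine ⟨M, hM, j, hcrit, hsub, ?_⟩
  apply Set.ext; intro x
  simp only [Set.mem_inter_iff, ZFSet.mem_toSet]
  constructor
  · rintro ⟨hx, hH⟩
    refine ⟨?_, hH⟩
    have hfix : jv j x = x := jv_fix_of_hfin hM j (hfin_of_HClass hlam hH)
    have := (jv_mem_iff j x X).mpr ?_
    · exact this
    · rw [hfix]; exact hx
  · rintro ⟨hx, hH⟩
    refine ⟨?_, hH⟩
    have hfix : jv j x = x := jv_fix_of_hfin hM j (hfin_of_HClass hlam hH)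
    have := (jv_mem_iff j x X).mp hx
    rw [hfix] at this
    exact this

/-- The main decoding transfer: strongness for the coding set gives strongness
for the first coded set, when `lam` is infinite. -/
lemma isStrong_decode {α lam t0 t1 XA XB : ZFSet}
    (hlam : Cardinal.aleph0 ≤ Cardinal.mk lam.toSet)
    (hne : t0 ≠ t1) (ht0fin : HFin t0) (ht0H : t0 ∈ HClass lam)
    (h : IsStrong α lam (tagSet t0 XA ∪ tagSet t1 XB)) : IsStrong α lam XA := by
  set C := tagSet t0 XA ∪ tagSet t1 XB with hC
  obtain ⟨M, hM, j, hcrit, hsub, heq⟩ := h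
  refine ⟨M, hM, j, hcrit, hsub, ?_⟩
  have hjt0 : jv j t0 = t0 := jv_fix_of_hfin hM j ht0fin
  -- χ holds in V
  have hchiV : chiF.Realize (M := ZFSet) ![XA, C, t0] := by
    rw [realize_chiF_V]
    intro x
    show x ∈ XA ↔ _
    rw [code_decode hne x]
    constructor
    · intro hp
      exact ⟨ZFSet.pair t0 x, hp, (pairCond_iff_V _ _ _).mpr rfl⟩
    · rintro ⟨p, hp, hcond⟩
      rw [pairCond_iff_V] at hcond
      subst hcond
      exact hp
  -- transfer to M
  have hchiM := (j.map_formula chiF ![XA, C, t0]).mpr hchiV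
  rw [realize_chiF_M] at hchiM
  -- the decoded form of χ in M
  have hdec : ∀ x : M, ((x : ZFSet) ∈ jv j XA ↔
      ∃ p : M, (p : ZFSet) ∈ jv j C ∧ (p : ZFSet) = ZFSet.pair t0 (x : ZFSet)) := by
    intro x
    have h1 := hchiM x
    constructor
    · intro hx
      obtain ⟨p, hpC, hcond⟩ := h1.mp hx
      refine ⟨p, hpC, ?_⟩
      have := (pairCond_iff_M hM p.2 ((⇑j ∘ ![XA, C, t0]) 2) x).mp hcond
      rwa [show (((⇑j ∘ ![XA, C, t0]) 2 : M) : ZFSet) = t0 from hjt0] at this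
    · rintro ⟨p, hpC, hpair⟩
      apply h1.mpr
      refine ⟨p, hpC, ?_⟩
      apply (pairCond_iff_M hM p.2 ((⇑j ∘ ![XA, C, t0]) 2) x).mpr
      rw [show (((⇑j ∘ ![XA, C, t0]) 2 : M) : ZFSet) = t0 from hjt0]
      exact hpair
  -- conclude the H_lam equality
  apply Set.ext; intro x
  simp only [Set.mem_inter_iff, ZFSet.mem_toSet]
  constructor
  · rintro ⟨hx, hH⟩
    refine ⟨?_, hH⟩
    have hxM : x ∈ M := hM _ (j XA).2 x hx
    obtain ⟨p, hpC, hpair⟩ := (hdec ⟨x, hxM⟩).mp hx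
    rw [hpair] at hpC
    have hpH : ZFSet.pair t0 x ∈ HClass lam :=
      pair_mem_HClass hlam ht0H hH
    have hpC' : ZFSet.pair t0 x ∈ C := by
      have : (ZFSet.pair t0 x : ZFSet) ∈ (jv j C).toSet ∩ HClass lam :=
        ⟨(ZFSet.mem_toSet _ _).mpr hpC, hpH⟩
      rw [heq] at this
      exact (ZFSet.mem_toSet _ _).mp this.1
    exact (code_decode hne x).mpr hpC'
  · rintro ⟨hx, hH⟩
    refine ⟨?_, hH⟩
    have hpC : ZFSet.pair t0 x ∈ C := (code_decode hne x).mp hx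
    have hpH : ZFSet.pair t0 x ∈ HClass lam := pair_mem_HClass hlam ht0H hH
    have hpjC : ZFSet.pair t0 x ∈ jv j C := by
      have : (ZFSet.pair t0 x : ZFSet) ∈ C.toSet ∩ HClass lam :=
        ⟨(ZFSet.mem_toSet _ _).mpr hpC, hpH⟩
      rw [← heq] at this
      exact (ZFSet.mem_toSet _ _).mp this.1
    have hpM : ZFSet.pair t0 x ∈ M := hM _ (j C).2 _ hpjC
    have hxM : x ∈ M := by
      have h1 : ({t0, x} : ZFSet) ∈ M :=
        hM _ hpM _ ((mem_pair_set _ _ _).mpr (Or.inr rfl))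
      exact hM _ h1 x (ZFSet.mem_pair.mpr (Or.inr rfl))
    exact (hdec ⟨x, hxM⟩).mpr ⟨⟨ZFSet.pair t0 x, hpM⟩, hpjC, rfl⟩

lemma tagSet_union_comm (t0 t1 XA XB : ZFSet) :
    tagSet t0 XA ∪ tagSet t1 XB = tagSet t1 XB ∪ tagSet t0 XA := by
  apply ZFSet.ext; intro z
  rw [ZFSet.mem_union, ZFSet.mem_union, or_comm]

/-- If `δ` is a Woodin cardinal, the Woodin filter on `δ` is closed under intersections. -/
theorem woodinFilter_inter_closed (δ : ZFSet) (hδ : IsWoodin δ)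
    (A B : ZFSet) (hA : A ∈ WoodinFilter δ) (hB : B ∈ WoodinFilter δ) :
    A ∩ B ∈ WoodinFilter δ := by
  obtain ⟨hAδ, XA, hXA, hXAstr⟩ := hA
  obtain ⟨hBδ, XB, hXB, hXBstr⟩ := hB
  obtain ⟨⟨hOrd, hReg, -⟩, -⟩ := hδ
  have hδinf : Cardinal.aleph0 ≤ Cardinal.mk δ.toSet := hReg.aleph0_le
  have hne : (∅ : ZFSet) ≠ ({∅} : ZFSet) := by
    intro h
    have : (∅ : ZFSet) ∈ ({∅} : ZFSet) := ZFSet.mem_singleton.mpr rfl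
    rw [← h] at this
    exact ZFSet.notMem_empty _ this
  have hfin0 : HFin (∅ : ZFSet) := by
    refine HFin.intro _ ?_ ?_
    · rw [ZFSet.toSet_empty]; exact Set.finite_empty
    · intro y hy; exact absurd hy (ZFSet.notMem_empty y)
  have hfin1 : HFin ({∅} : ZFSet) := by
    refine HFin.intro _ ?_ ?_
    · rw [ZFSet.toSet_singleton]; exact Set.finite_singleton _
    · intro y hy
      rw [ZFSet.mem_singleton] at hy
      subst hy; exact hfin0
  set C := tagSet ∅ XA ∪ tagSet ({∅} : ZFSet) XB with hCdef
  refine ⟨?_, C, ?_, ?_⟩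
  · intro z hz
    rw [ZFSet.mem_inter] at hz
    exact hAδ hz.1
  · -- C ⊆ H_δ
    intro z hz
    rw [ZFSet.mem_toSet, ZFSet.mem_union] at hz
    rcases hz with hz | hz
    · obtain ⟨x, hx, rfl⟩ := mem_tagSet.mp hz
      exact pair_mem_HClass hδinf (empty_mem_HClass hδinf)
        (hXA ((ZFSet.mem_toSet _ _).mpr hx))
    · obtain ⟨x, hx, rfl⟩ := mem_tagSet.mp hz
      exact pair_mem_HClass hδinf
        (singleton_mem_HClass hδinf (empty_mem_HClass hδinf))
        (hXB ((ZFSet.mem_toSet _ _).mpr hx))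
  · intro α hα hstr
    rw [ZFSet.mem_inter]
    constructor
    · apply hXAstr α hα
      intro lam hlam
      by_cases hinf : Cardinal.aleph0 ≤ Cardinal.mk lam.toSet
      · exact isStrong_decode hinf hne hfin0 (empty_mem_HClass hinf) (hstr lam hlam)
      · exact isStrong_of_hfin hinf (hstr lam hlam) XA
    · apply hXBstr α hα
      intro lam hlam
      by_cases hinf : Cardinal.aleph0 ≤ Cardinal.mk lam.toSet
      · refine isStrong_decode (t1 := (∅ : ZFSet)) (XB := XA) hinf (Ne.symm hne) hfin1
          (singleton_mem_HClass hinf (empty_mem_HClass hinf)) ?_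
        rw [← tagSet_union_comm]
        exact hstr lam hlam
      · exact isStrong_of_hfin hinf (hstr lam hlam) XB
end

section
/- Statement (3) of Theorem 1.1 implies statement (1): if for every A ⊆ V_κ the set {α < κ : α is (γ−A)-strong for all γ < κ} is stationary in κ (and κ is inaccessible), then κ is a Woodin cardinal. -/
open FirstOrder

/-- The rank-initial segment `V_κ` (for `κ` an ordinal, viewed as a ZF-set). -/
noncomputable def Vclass (κ : ZFSet) : Set ZFSet := {x | x.rank < κ.rank}

/-- `γ` is a limit ordinal. -/
def IsLimitOrd (γ : ZFSet) : Prop := IsOrd γ ∧ γ ≠ ∅ ∧ ∀ α ∈ γ, ∃ β ∈ γ, α ∈ β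

/-- `C ⊆ κ` is closed unbounded in `κ`: `sup C = κ`, and every limit `γ < κ` with
`sup (C ∩ γ) = γ` belongs to `C`. -/
def IsClubZF (C : Set ZFSet) (κ : ZFSet) : Prop :=
  C ⊆ κ.toSet ∧ (∀ α ∈ κ, ∃ β ∈ C, α ∈ β ∨ α = β) ∧
  ∀ γ ∈ κ, IsLimitOrd γ → (∀ α ∈ γ, ∃ β ∈ C, β ∈ γ ∧ (α ∈ β ∨ α = β)) → γ ∈ C

/-- `S` is stationary in `κ`: it meets every closed unbounded subset of `κ`. -/
def IsStationaryZF (S : Set ZFSet) (κ : ZFSet) : Prop :=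
  ∀ C : Set ZFSet, IsClubZF C κ → (S ∩ C).Nonempty

section AuxLemmas
universe u

theorem aux_mem_isOrd {z y : ZFSet.{u}} (hz : IsOrd z) (hy : y ∈ z) : IsOrd y :=
  ⟨hz.2 y hy, fun w hw => hz.2 w (ZFSet.subset_def.mp (hz.1 y hy) hw)⟩

theorem aux_rank_surj (z : ZFSet.{u}) :
    IsOrd z → ∀ o < z.rank, ∃ y ∈ z, y.rank = o := by
  induction z using ZFSet.inductionOn with
  | _ z IH =>
    intro hz o ho
    obtain ⟨y, hy, hle⟩ := ZFSet.lt_rank_iff.mp ho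
    rcases eq_or_lt_of_le hle with heq | hlt
    · exact ⟨y, hy, heq.symm⟩
    · obtain ⟨w, hw, hwr⟩ := IH y hy (aux_mem_isOrd hz hy) o hlt
      exact ⟨w, ZFSet.subset_def.mp (hz.1 y hy) hw, hwr⟩

theorem aux_rank_inj (x : ZFSet.{u}) :
    IsOrd x → ∀ z : ZFSet.{u}, IsOrd z → x.rank = z.rank → x = z := by
  induction x using ZFSet.inductionOn with
  | _ x IH =>
    intro hx z hzo hr
    apply ZFSet.ext
    intro w
    constructor
    · intro hw
      have h1 : w.rank < z.rank := hr ▸ ZFSet.rank_lt_of_mem hw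
      obtain ⟨w', hw', hwr⟩ := aux_rank_surj z hzo _ h1
      rwa [IH w hw (aux_mem_isOrd hx hw) w' (aux_mem_isOrd hzo hw') hwr.symm]
    · intro hw
      have h1 : w.rank < x.rank := by rw [hr]; exact ZFSet.rank_lt_of_mem hw
      obtain ⟨w', hw', hwr⟩ := aux_rank_surj x hx _ h1
      rwa [← IH w' hw' (aux_mem_isOrd hx hw') w (aux_mem_isOrd hzo hw) hwr]

theorem aux_card_le (κ : ZFSet.{u}) (hκ : IsOrd κ) :
    Cardinal.mk κ.toSet ≤ Cardinal.lift.{u+1} κ.rank.card := by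
  rw [← Ordinal.mk_Iio_ordinal]
  apply Cardinal.mk_le_of_injective
    (f := fun y : κ.toSet => (⟨(y : ZFSet).rank,
      ZFSet.rank_lt_of_mem (Iff.rfl.mp y.2)⟩ : Set.Iio κ.rank))
  intro a b hab
  exact Subtype.ext (aux_rank_inj a (aux_mem_isOrd hκ (Iff.rfl.mp a.2)) b
    (aux_mem_isOrd hκ (Iff.rfl.mp b.2)) (congrArg Subtype.val hab))

theorem aux_HClass_subset_Vclass (κ : ZFSet.{u}) (hκ : Inacc κ) :
    HClass κ ⊆ Vclass κ := by
  obtain ⟨hord, hreg, -⟩ := hκ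
  set c := Cardinal.mk κ.toSet with hc
  have hordc : c.ord ≤ Ordinal.lift.{u+1} κ.rank :=
    calc c.ord ≤ (Cardinal.lift.{u+1} κ.rank.card).ord :=
          Cardinal.ord_le_ord.mpr (aux_card_le κ hord)
      _ = Ordinal.lift.{u+1} κ.rank.card.ord := (Cardinal.lift_ord _).symm
      _ ≤ Ordinal.lift.{u+1} κ.rank := Ordinal.lift_le.mpr (Cardinal.ord_card_le _)
  rintro x ⟨t, htr, hxt, hlt⟩
  have key : ∀ y : ZFSet.{u}, y ∈ t → Ordinal.lift.{u+1} y.rank < c.ord := by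
    intro y
    induction y using ZFSet.inductionOn with
    | _ y IH =>
      intro hyt
      have hsub : y.toSet ⊆ t.toSet := Iff.rfl.mpr (htr y hyt)
      have hcard : Cardinal.mk y.toSet < c :=
        lt_of_le_of_lt (Cardinal.mk_le_mk_of_subset hsub) hlt
      have hlsub : Ordinal.lsub.{u+1,u+1} (fun z : y.toSet => Ordinal.lift.{u+1} (z : ZFSet).rank)
          < c.ord := by
        refine Cardinal.lsub_lt_ord_of_isRegular.{u+1} hreg hcard fun z => ?_
        exact IH z (Iff.rfl.mp z.2)
          (Iff.rfl.mp (hsub z.2))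
      refine lt_of_le_of_lt ?_ hlsub
      refine le_of_forall_lt fun a ha => ?_
      obtain ⟨a', ha', rfl⟩ := Ordinal.lt_lift_iff.mp ha
      obtain ⟨z, hz, hle⟩ := ZFSet.lt_rank_iff.mp ha'
      calc Ordinal.lift.{u+1} a' ≤ Ordinal.lift.{u+1} z.rank := Ordinal.lift_le.mpr hle
        _ < _ := Ordinal.lt_lsub _ (⟨z, Iff.rfl.mpr hz⟩ : y.toSet)
  have : Ordinal.lift.{u+1} x.rank < Ordinal.lift.{u+1} κ.rank :=
    lt_of_lt_of_le (key x hxt) hordc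
  exact Ordinal.lift_lt.mp this

end AuxLemmas

/-- (3) ⇒ (1) of Theorem 1.1: if `κ` is inaccessible and for every `A ⊆ V_κ` the set of
`α < κ` which are `(γ-A)`-strong for all `γ < κ` is stationary in `κ`, then `κ` is Woodin. -/
theorem isWoodin_of_stationary_strongs (κ : ZFSet) (hκ : Inacc κ)
    (h : ∀ A : ZFSet, A.toSet ⊆ Vclass κ →
      IsStationaryZF {α | α ∈ κ ∧ ∀ γ ∈ κ, IsStrong α γ A} κ) :
    IsWoodin κ := by
  refine ⟨hκ, fun X hX => ?_⟩
  have hs := h X (fun x hx => aux_HClass_subset_Vclass κ hκ (hX hx))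
  have hclub : IsClubZF κ.toSet κ :=
    ⟨Set.Subset.rfl, fun α hα => ⟨α, Iff.rfl.mpr hα, Or.inr rfl⟩,
      fun γ hγ _ _ => Iff.rfl.mpr hγ⟩
  obtain ⟨α, ⟨hα1, hα2⟩, -⟩ := hs κ.toSet hclub
  exact ⟨α, hα1, hα2⟩
end
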